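/- Define the Lyapunov function L_k = F(θ̂^k) + (3γ_k L²/(nρ))‖Θ^k − Θ̂^k‖_F². There exist λ ∈ [0,1) and a finite constant c ≥ 0 (depending only on n, L, G, A, π and ρ) such that for every stepsize sequence with 0 < γ_k ≤ 1/(4L), the Di-DGD iterates satisfy for all k ≥ 0: L_{k+1} ≤ L_k − (γ_k/4)‖∇F(θ̂^k)‖² − (3γ_k L²(2−ρ)/(2nρ))‖Θ^k − Θ̂^k‖_F² + (3γ_{k+1} L²/(nρ))‖Θ^{k+1} − Θ̂^{k+1}‖_F² + c γ_k λ^{2k}. -/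

import Mathlib

/-!
In `Lyap (k + 1)` the term with `γ (k + 1)` cancels against the same term on the right, and the
consensus coefficients combine to `3 γ_k L² / (2n)`, so only a descent inequality for `F` along
the averaged iterate is needed. Because `πᵀA = πᵀ`, the average performs an inexact gradient step
`θ̂^{k+1} = θ̂^k - γ_k u_k` with `u_k = ∑ i, π_i / (n (A^k)_ii) ∇f_i(θ_i^k)`, and for `γ_k L ≤ 1/4`
the descent lemma gives `F(θ̂^{k+1}) ≤ F(θ̂^k) - γ_k/4 ‖∇F(θ̂^k)‖² + 3γ_k/4 ‖u_k - ∇F(θ̂^k)‖²`.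
The error `u_k - ∇F(θ̂^k)` splits into a consensus part, at most `(L²/n) ‖Θ^k - Θ̂^k‖_F²` in square
by smoothness, and a part driven by `(A^k)_ii - π_i`. From
`A^{k+1} - 𝟙πᵀ = (A - 𝟙πᵀ)(A^k - 𝟙πᵀ)` and the spectral gap, `((A^k)_ii - π_i)² ≤ n (1 - ρ)^{2k}`;
and `(A^k)_ii` is bounded below by some `b > 0`, being positive for every `k` and convergent to
`π_i > 0`. So `λ = 1 - ρ` and `c = 3 n G² / (2 b²)` work.
-/

open InnerProductSpace Filter Topology

section Descent

variable {E : Type*} [NormedAddCommGroup E] [InnerProductSpace ℝ E] [CompleteSpace E]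

theorem HasGradientAt.fun_sum {ι : Type*} {s : Finset ι} {f : ι → E → ℝ} {f' : ι → E} {x : E}
    (h : ∀ i ∈ s, HasGradientAt (f i) (f' i) x) :
    HasGradientAt (fun y => ∑ i ∈ s, f i y) (∑ i ∈ s, f' i) x := by
  rw [hasGradientAt_iff_hasFDerivAt, map_sum]
  exact HasFDerivAt.fun_sum fun i hi => (h i hi).hasFDerivAt

theorem HasGradientAt.const_mul {f : E → ℝ} {f' x : E} (h : HasGradientAt f f' x) (c : ℝ) :
    HasGradientAt (fun y => c * f y) (c • f') x := by
  rw [hasGradientAt_iff_hasFDerivAt, map_smul]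
  exact h.hasFDerivAt.const_mul c

theorem hasDerivAt_comp_add_smul {φ : E → ℝ} (hφ : Differentiable ℝ φ) (x v : E) (t : ℝ) :
    HasDerivAt (fun s : ℝ => φ (x + s • v)) ⟪gradient φ (x + t • v), v⟫_ℝ t := by
  have hline : HasDerivAt (fun s : ℝ => x + s • v) v t := by
    simpa using ((hasDerivAt_id t).smul_const v).const_add x
  simpa [toDual_apply_apply, Function.comp_def] using
    (hφ (x + t • v)).hasGradientAt.hasFDerivAt.comp_hasDerivAt t hline

theorem le_add_inner_gradient_add_sq {φ : E → ℝ} (hφ : Differentiable ℝ φ) {L : ℝ}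
    (hlip : ∀ x z, ‖gradient φ x - gradient φ z‖ ≤ L * ‖x - z‖) (x v : E) :
    φ (x + v) ≤ φ x + ⟪gradient φ x, v⟫_ℝ + L / 2 * ‖v‖ ^ 2 := by
  set ψ : ℝ → ℝ := fun t => φ (x + t • v) - t * ⟪gradient φ x, v⟫_ℝ - L / 2 * t ^ 2 * ‖v‖ ^ 2
  have hψ : ∀ t, HasDerivAt ψ
      (⟪gradient φ (x + t • v) - gradient φ x, v⟫_ℝ - L * t * ‖v‖ ^ 2) t := by
    intro t
    refine (((hasDerivAt_comp_add_smul hφ x v t).sub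
      ((hasDerivAt_id t).mul_const ⟪gradient φ x, v⟫_ℝ)).sub
      (((hasDerivAt_pow 2 t).const_mul (L / 2)).mul_const (‖v‖ ^ 2))).congr_deriv ?_
    simp only [inner_sub_left, one_mul]
    ring
  have hanti : AntitoneOn ψ (Set.Icc 0 1) := by
    refine antitoneOn_of_hasDerivWithinAt_nonpos (convex_Icc 0 1)
      (fun t _ => (hψ t).continuousAt.continuousWithinAt) (fun t _ => (hψ t).hasDerivWithinAt) ?_
    intro t ht
    rw [interior_Icc] at ht
    have hinner : ⟪gradient φ (x + t • v) - gradient φ x, v⟫_ℝ ≤ L * t * ‖v‖ ^ 2 :=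
      calc _ ≤ ‖gradient φ (x + t • v) - gradient φ x‖ * ‖v‖ := real_inner_le_norm _ _
        _ ≤ L * ‖t • v‖ * ‖v‖ := by
          gcongr
          simpa using hlip (x + t • v) x
        _ = L * t * ‖v‖ ^ 2 := by rw [norm_smul, Real.norm_of_nonneg ht.1.le]; ring
    linarith
  have h01 := hanti (by simp) (by simp) zero_le_one
  simp only [ψ, zero_smul, add_zero, one_smul, zero_mul, one_mul, one_pow, sub_zero,
    mul_zero, ne_eq, OfNat.ofNat_ne_zero, not_false_eq_true, zero_pow] at h01
  linarith

theorem apply_sub_smul_le_of_inexact_gradient {φ : E → ℝ} (hφ : Differentiable ℝ φ) {L γ : ℝ}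
    (hlip : ∀ x z, ‖gradient φ x - gradient φ z‖ ≤ L * ‖x - z‖) (hγ : 0 ≤ γ) (hγL : γ * L ≤ 1 / 4)
    (x u : E) :
    φ (x - γ • u) ≤ φ x - γ / 4 * ‖gradient φ x‖ ^ 2 + 3 * γ / 4 * ‖u - gradient φ x‖ ^ 2 := by
  have hdesc := le_add_inner_gradient_add_sq hφ hlip x (-(γ • u))
  rw [← sub_eq_add_neg, inner_neg_right, real_inner_smul_right, norm_neg, norm_smul,
    Real.norm_of_nonneg hγ] at hdesc
  set D := gradient φ x
  have hu : u = D + (u - D) := (add_sub_cancel D u).symm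
  have hinner : ⟪D, u⟫_ℝ = ‖D‖ ^ 2 + ⟪D, u - D⟫_ℝ := by
    rw [hu, inner_add_right, real_inner_self_eq_norm_sq, add_sub_cancel_left]
  have hsq : ‖u‖ ^ 2 = ‖D‖ ^ 2 + 2 * ⟪D, u - D⟫_ℝ + ‖u - D‖ ^ 2 := by
    rw [hu, norm_add_sq_real, add_sub_cancel_left]
  have hquad : L / 2 * (γ * ‖u‖) ^ 2 ≤ γ / 8 * ‖u‖ ^ 2 := by
    calc L / 2 * (γ * ‖u‖) ^ 2 = γ * L * (γ / 2 * ‖u‖ ^ 2) := by ring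
      _ ≤ 1 / 4 * (γ / 2 * ‖u‖ ^ 2) := by gcongr
      _ = γ / 8 * ‖u‖ ^ 2 := by ring
  have hcross : 0 ≤ γ * (5 / 8 * ‖D‖ ^ 2 + 3 / 4 * ⟪D, u - D⟫_ℝ + 5 / 8 * ‖u - D‖ ^ 2) := by
    refine mul_nonneg hγ ?_
    nlinarith [abs_real_inner_le_norm D (u - D), neg_abs_le ⟪D, u - D⟫_ℝ,
      sq_nonneg (‖D‖ - ‖u - D‖)]
  rw [hinner] at hdesc
  rw [hsq] at hquad
  linear_combination hdesc + hquad + hcross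

end Descent

theorem exists_pos_forall_le_of_eventually_le {ι : Type*} [Finite ι] {s : ι → ℕ → ℝ}
    (hpos : ∀ i k, 0 < s i k) (hlim : ∀ i, ∃ a > 0, ∀ᶠ k in atTop, a ≤ s i k) :
    ∃ b > 0, ∀ i k, b ≤ s i k := by
  suffices h : ∀ i, ∀ᶠ b in 𝓝[>] (0 : ℝ), ∀ k, b ≤ s i k by
    obtain ⟨b, hb, hbpos⟩ := ((eventually_all.2 h).and self_mem_nhdsWithin).exists
    exact ⟨b, hbpos, hb⟩
  intro i
  obtain ⟨a, ha, hev⟩ := hlim i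
  obtain ⟨N, hN⟩ := eventually_atTop.1 hev
  have hsmall : ∀ᶠ b in 𝓝[>] (0 : ℝ), ∀ k ∈ Set.Iio N, b ≤ s i k :=
    (eventually_all_finite (Set.finite_Iio N)).2 fun k _ =>
      (eventually_le_nhds (hpos i k)).filter_mono nhdsWithin_le_nhds
  filter_upwards [hsmall, (eventually_le_nhds ha).filter_mono nhdsWithin_le_nhds]
    with b hb hba k
  rcases lt_or_ge k N with hk | hk
  · exact hb k hk
  · exact hba.trans (hN k hk)

namespace Matrix

variable {ι : Type*} [Fintype ι] [DecidableEq ι] {A : Matrix ι ι ℝ}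

theorem diag_pow_pos (hA : ∀ i j, 0 ≤ A i j) (hdiag : ∀ i, 0 < A i i) (k : ℕ) (i : ι) :
    0 < (A ^ k) i i := by
  induction k with
  | zero => simp
  | succ k ih =>
    rw [pow_succ', mul_apply]
    exact (mul_pos (hdiag i) ih).trans_le <| Finset.single_le_sum
      (f := fun l => A i l * (A ^ k) l i)
      (fun l _ => mul_nonneg (hA i l) (pow_apply_nonneg hA k l i)) (Finset.mem_univ i)

theorem vecMul_pow_of_vecMul_eq {π : ι → ℝ} (hπ : π ᵥ* A = π) (k : ℕ) : π ᵥ* A ^ k = π := by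
  induction k with
  | zero => simp
  | succ k ih => rw [pow_succ', ← vecMul_vecMul, hπ, ih]

theorem pow_succ_apply_sub_eq {π : ι → ℝ} (hrow : ∀ i, ∑ j, A i j = 1)
    (hπ : ∀ j, ∑ i, π i * A i j = π j) (hπ1 : ∑ i, π i = 1) (k : ℕ) (i j : ι) :
    (A ^ (k + 1)) i j - π j = ∑ l, (A i l - π l) * ((A ^ k) l j - π j) := by
  have hstat : ∑ l, π l * (A ^ k) l j = π j :=
    congrFun (vecMul_pow_of_vecMul_eq (funext hπ) k) j
  simp only [sub_mul, mul_sub, Finset.sum_sub_distrib, ← Finset.sum_mul, hrow, hπ1, hstat,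
    pow_succ', mul_apply]
  ring

theorem sum_sq_pow_apply_sub_le {π : ι → ℝ} {μ : ℝ} (hrow : ∀ i, ∑ j, A i j = 1)
    (hπ0 : ∀ i, 0 ≤ π i) (hπ : ∀ j, ∑ i, π i * A i j = π j) (hπ1 : ∑ i, π i = 1)
    (hspec : ∀ x : ι → ℝ, ∑ i, (∑ j, (A i j - π j) * x j) ^ 2 ≤ μ ^ 2 * ∑ i, x i ^ 2)
    (k : ℕ) (j : ι) :
    ∑ i, ((A ^ k) i j - π j) ^ 2 ≤ Fintype.card ι * μ ^ (2 * k) := by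
  induction k with
  | zero =>
    have hπj : π j ≤ 1 := hπ1 ▸ Finset.single_le_sum (fun i _ => hπ0 i) (Finset.mem_univ j)
    have hterm : ∀ i, ((1 : Matrix ι ι ℝ) i j - π j) ^ 2 ≤ 1 := by
      intro i
      rw [sq_le_one_iff_abs_le_one, abs_le]
      rcases eq_or_ne i j with rfl | h
      · rw [one_apply_eq]; constructor <;> linarith [hπ0 i]
      · rw [one_apply_ne h]; constructor <;> linarith [hπ0 j]
    simpa using Finset.sum_le_sum fun i (_ : i ∈ Finset.univ) => hterm i
  | succ k ih =>
    calc ∑ i, ((A ^ (k + 1)) i j - π j) ^ 2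
        = ∑ i, (∑ l, (A i l - π l) * ((A ^ k) l j - π j)) ^ 2 := by
          simp only [pow_succ_apply_sub_eq hrow hπ hπ1]
      _ ≤ μ ^ 2 * ∑ l, ((A ^ k) l j - π j) ^ 2 := hspec _
      _ ≤ μ ^ 2 * (Fintype.card ι * μ ^ (2 * k)) := by gcongr
      _ = Fintype.card ι * μ ^ (2 * (k + 1)) := by ring

theorem sq_diag_pow_sub_le {π : ι → ℝ} {μ : ℝ} (hrow : ∀ i, ∑ j, A i j = 1)
    (hπ0 : ∀ i, 0 ≤ π i) (hπ : ∀ j, ∑ i, π i * A i j = π j) (hπ1 : ∑ i, π i = 1)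
    (hspec : ∀ x : ι → ℝ, ∑ i, (∑ j, (A i j - π j) * x j) ^ 2 ≤ μ ^ 2 * ∑ i, x i ^ 2)
    (k : ℕ) (i : ι) :
    ((A ^ k) i i - π i) ^ 2 ≤ Fintype.card ι * μ ^ (2 * k) :=
  (Finset.single_le_sum (f := fun l => ((A ^ k) l i - π i) ^ 2) (fun _ _ => sq_nonneg _)
    (Finset.mem_univ i)).trans (sum_sq_pow_apply_sub_le hrow hπ0 hπ hπ1 hspec k i)

theorem exists_pos_le_diag_pow {π : ι → ℝ} {μ : ℝ} (hA : ∀ i j, 0 ≤ A i j)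
    (hdiag : ∀ i, 0 < A i i) (hrow : ∀ i, ∑ j, A i j = 1) (hπpos : ∀ i, 0 < π i)
    (hπ : ∀ j, ∑ i, π i * A i j = π j) (hπ1 : ∑ i, π i = 1) (hμ : |μ| < 1)
    (hspec : ∀ x : ι → ℝ, ∑ i, (∑ j, (A i j - π j) * x j) ^ 2 ≤ μ ^ 2 * ∑ i, x i ^ 2) :
    ∃ b > 0, ∀ k i, b ≤ (A ^ k) i i := by
  obtain ⟨b, hb, hle⟩ := exists_pos_forall_le_of_eventually_le
    (s := fun i k => (A ^ k) i i) (fun i k => diag_pow_pos hA hdiag k i) fun i => by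
      have hgeom : Tendsto (fun k => Fintype.card ι * μ ^ (2 * k)) atTop (𝓝 0) := by
        simpa [pow_mul] using (tendsto_pow_atTop_nhds_zero_of_lt_one (sq_nonneg μ)
          (by rwa [← sq_abs, sq_lt_one_iff_abs_lt_one, abs_abs])).const_mul
          (Fintype.card ι : ℝ)
      refine ⟨π i / 2, half_pos (hπpos i), ?_⟩
      filter_upwards [hgeom.eventually (gt_mem_nhds (pow_pos (half_pos (hπpos i)) 2))]
        with k hk
      have := abs_lt_of_sq_lt_sq
        ((sq_diag_pow_sub_le hrow (fun i => (hπpos i).le) hπ hπ1 hspec k i).trans_lt hk)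
        (half_pos (hπpos i)).le
      linarith [(abs_lt.1 this).1]
  exact ⟨b, hb, fun k i => hle i k⟩

end Matrix

theorem sum_smul_eq_sub_of_step {ι E : Type*} [Fintype ι] [AddCommGroup E] [Module ℝ E]
    {A : Matrix ι ι ℝ} {π : ι → ℝ} (hπ : ∀ j, ∑ i, π i * A i j = π j) {γ : ℝ} {c : ι → ℝ}
    {θ θ' g : ι → E} (h : ∀ i, θ' i = ∑ j, A i j • θ j - (γ / c i) • g i) :
    ∑ i, π i • θ' i = ∑ i, π i • θ i - γ • ∑ i, (π i / c i) • g i := by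
  simp only [h, smul_sub, Finset.sum_sub_distrib, Finset.smul_sum, smul_smul]
  congr 1
  · rw [Finset.sum_comm]
    simp only [← Finset.sum_smul, hπ]
  · congr! 2 with i
    ring

section Network

variable {ι E : Type*} [SeminormedAddCommGroup E]

theorem norm_sum_sq_le_card_mul (s : Finset ι) (v : ι → E) :
    ‖∑ i ∈ s, v i‖ ^ 2 ≤ s.card * ∑ i ∈ s, ‖v i‖ ^ 2 :=
  (pow_le_pow_left₀ (norm_nonneg _) (norm_sum_le _ _) 2).trans sq_sum_le_card_mul_sum_sq

theorem norm_add_sq_le_two_mul (x y : E) : ‖x + y‖ ^ 2 ≤ 2 * (‖x‖ ^ 2 + ‖y‖ ^ 2) :=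
  (pow_le_pow_left₀ (norm_nonneg _) (norm_add_le x y) 2).trans add_sq_le

variable [Fintype ι]

theorem norm_sq_weighted_sum_sub_mean_le [Nonempty ι] [NormedSpace ℝ E] {π a r : ι → ℝ}
    {b δ G L : ℝ} {g h : ι → E} (hb : 0 < b) (ha : ∀ i, b ≤ a i)
    (hδ : ∀ i, (a i - π i) ^ 2 ≤ δ) (hg : ∀ i, ‖g i‖ ≤ G) (hgh : ∀ i, ‖g i - h i‖ ≤ L * r i) :
    ‖∑ i, (π i / (Fintype.card ι * a i)) • g i - (1 / (Fintype.card ι : ℝ)) • ∑ i, h i‖ ^ 2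
      ≤ 2 * G ^ 2 * δ / b ^ 2 + 2 * L ^ 2 / Fintype.card ι * ∑ i, r i ^ 2 := by
  set N : ℝ := (Fintype.card ι : ℝ) with hNdef
  have hN : 0 < N := Nat.cast_pos.2 Fintype.card_pos
  have hsplit : ∑ i, (π i / (N * a i)) • g i - (1 / N) • ∑ i, h i
      = ∑ i, ((π i - a i) / (N * a i)) • g i + ∑ i, (1 / N) • (g i - h i) := by
    rw [Finset.smul_sum, ← Finset.sum_sub_distrib, ← Finset.sum_add_distrib]
    refine Finset.sum_congr rfl fun i _ => ?_
    have : a i ≠ 0 := (hb.trans_le (ha i)).ne'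
    rw [smul_sub, ← add_sub_assoc, ← add_smul]
    congr 2
    field_simp
    ring
  have hδ0 : 0 ≤ δ := (sq_nonneg _).trans (hδ (Classical.arbitrary ι))
  have hweight : ‖∑ i, ((π i - a i) / (N * a i)) • g i‖ ^ 2 ≤ G ^ 2 * δ / b ^ 2 := by
    calc ‖∑ i, ((π i - a i) / (N * a i)) • g i‖ ^ 2
        ≤ N * ∑ i, ‖((π i - a i) / (N * a i)) • g i‖ ^ 2 :=
          (norm_sum_sq_le_card_mul _ _).trans_eq (by rw [Finset.card_univ])
      _ ≤ N * ∑ _i : ι, δ / (N * b) ^ 2 * G ^ 2 := by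
          gcongr with i
          rw [norm_smul, mul_pow, Real.norm_eq_abs, sq_abs, div_pow]
          gcongr
          · rw [← neg_sub, neg_sq]
            exact hδ i
          · exact ha i
          · exact hg i
      _ = G ^ 2 * δ / b ^ 2 := by
          rw [Finset.sum_const, Finset.card_univ, nsmul_eq_mul, ← hNdef]
          field_simp
  have hsmooth : ‖∑ i, (1 / N) • (g i - h i)‖ ^ 2 ≤ L ^ 2 / N * ∑ i, r i ^ 2 := by
    calc ‖∑ i, (1 / N) • (g i - h i)‖ ^ 2 ≤ N * ∑ i, ‖(1 / N) • (g i - h i)‖ ^ 2 :=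
          (norm_sum_sq_le_card_mul _ _).trans_eq (by rw [Finset.card_univ])
      _ ≤ N * ∑ i, (1 / N) ^ 2 * (L * r i) ^ 2 := by
          gcongr with i
          rw [norm_smul, mul_pow, Real.norm_of_nonneg (by positivity)]
          gcongr
          exact hgh i
      _ = L ^ 2 / N * ∑ i, r i ^ 2 := by
          rw [Finset.mul_sum, Finset.mul_sum]
          refine Finset.sum_congr rfl fun i _ => ?_
          field_simp
  rw [hsplit]
  calc _ ≤ 2 * (‖∑ i, ((π i - a i) / (N * a i)) • g i‖ ^ 2 + ‖∑ i, (1 / N) • (g i - h i)‖ ^ 2) :=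
        norm_add_sq_le_two_mul _ _
    _ ≤ 2 * (G ^ 2 * δ / b ^ 2 + L ^ 2 / N * ∑ i, r i ^ 2) := by gcongr
    _ = _ := by ring

end Network

section Average

variable {ι E : Type*} [Fintype ι] [NormedAddCommGroup E] [InnerProductSpace ℝ E]
  [CompleteSpace E] {f : ι → E → ℝ}

theorem hasGradientAt_average (hf : ∀ i, Differentiable ℝ (f i)) (x : E) :
    HasGradientAt (fun y => 1 / (Fintype.card ι : ℝ) * ∑ i, f i y)
      ((1 / (Fintype.card ι : ℝ)) • ∑ i, gradient (f i) x) x :=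
  (HasGradientAt.fun_sum fun i _ => (hf i x).hasGradientAt).const_mul _

theorem norm_gradient_average_sub_le [Nonempty ι] (hf : ∀ i, Differentiable ℝ (f i)) {L : ℝ}
    (hlip : ∀ i x z, ‖gradient (f i) x - gradient (f i) z‖ ≤ L * ‖x - z‖) (x z : E) :
    ‖gradient (fun y => 1 / (Fintype.card ι : ℝ) * ∑ i, f i y) x
      - gradient (fun y => 1 / (Fintype.card ι : ℝ) * ∑ i, f i y) z‖ ≤ L * ‖x - z‖ := by
  have hN : (0 : ℝ) < Fintype.card ι := Nat.cast_pos.2 Fintype.card_pos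
  rw [(hasGradientAt_average hf x).gradient, (hasGradientAt_average hf z).gradient, ← smul_sub,
    ← Finset.sum_sub_distrib, norm_smul, Real.norm_of_nonneg (by positivity)]
  calc 1 / (Fintype.card ι : ℝ) * ‖∑ i, (gradient (f i) x - gradient (f i) z)‖
      ≤ 1 / (Fintype.card ι : ℝ) * ∑ _i : ι, L * ‖x - z‖ := by
        gcongr
        exact (norm_sum_le _ _).trans (Finset.sum_le_sum fun i _ => hlip i x z)
    _ = L * ‖x - z‖ := by
        rw [Finset.sum_const, Finset.card_univ, nsmul_eq_mul]
        field_simp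

theorem average_sub_smul_weighted_gradient_le [Nonempty ι] (hf : ∀ i, Differentiable ℝ (f i))
    {L G : ℝ} (hlip : ∀ i x z, ‖gradient (f i) x - gradient (f i) z‖ ≤ L * ‖x - z‖)
    (hbdd : ∀ i x, ‖gradient (f i) x‖ ≤ G) {π a : ι → ℝ} {b δ γ : ℝ} (hb : 0 < b)
    (ha : ∀ i, b ≤ a i) (hδ : ∀ i, (a i - π i) ^ 2 ≤ δ) (hγ : 0 ≤ γ) (hγL : γ * L ≤ 1 / 4)
    (θ : ι → E) (x : E) :
    let N : ℝ := Fintype.card ι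
    let F : E → ℝ := fun y => 1 / N * ∑ i, f i y
    F (x - γ • ∑ i, (π i / (N * a i)) • gradient (f i) (θ i))
      ≤ F x - γ / 4 * ‖gradient F x‖ ^ 2 + 3 * γ * L ^ 2 / (2 * N) * ∑ i, ‖θ i - x‖ ^ 2
        + 3 / 2 * G ^ 2 * δ / b ^ 2 * γ := by
  intro N F
  have hstep := apply_sub_smul_le_of_inexact_gradient
    (fun y => (hasGradientAt_average hf y).differentiableAt) (norm_gradient_average_sub_le hf hlip)
    hγ hγL x (∑ i, (π i / (N * a i)) • gradient (f i) (θ i))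
  have herr := norm_sq_weighted_sum_sub_mean_le (π := π) (r := fun i => ‖θ i - x‖) hb ha hδ
    (fun i => hbdd i (θ i)) (fun i => hlip i (θ i) x)
  rw [← (hasGradientAt_average hf x).gradient] at herr
  have hscaled := mul_le_mul_of_nonneg_left herr (by positivity : 0 ≤ 3 * γ / 4)
  refine hstep.trans ?_
  simp only [F, N] at *
  linear_combination hscaled

end Average

theorem stmt_12_general (n d : ℕ) (hn : 1 ≤ n)
    (A : Matrix (Fin n) (Fin n) ℝ)
    (hA_nonneg : ∀ i j, 0 ≤ A i j)
    (hA_diag : ∀ i, 0 < A i i)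
    (hA_row : ∀ i, ∑ j, A i j = 1)
    (π : Fin n → ℝ)
    (hπ_pos : ∀ i, 0 < π i)
    (hπ_left : ∀ j, ∑ i, π i * A i j = π j)
    (hπ_sum : ∑ i, π i = 1)
    (ρ : ℝ) (hρ0 : 0 < ρ) (hρ1 : ρ ≤ 1)
    (hspec : ∀ x : Fin n → ℝ,
      ∑ i, (∑ j, (A i j - π j) * x j) ^ 2 ≤ (1 - ρ) ^ 2 * ∑ i, (x i) ^ 2)
    (L G : ℝ) (hL : 0 < L)
    (f : Fin n → EuclideanSpace ℝ (Fin d) → ℝ)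
    (hdiff : ∀ i, Differentiable ℝ (f i))
    (hLip : ∀ i x z, ‖gradient (f i) x - gradient (f i) z‖ ≤ L * ‖x - z‖)
    (hbdd : ∀ i x, ‖gradient (f i) x‖ ≤ G) :
    ∃ lam : ℝ, 0 ≤ lam ∧ lam < 1 ∧ ∃ c : ℝ, 0 ≤ c ∧
      ∀ (γ : ℕ → ℝ), (∀ k, 0 < γ k) → (∀ k, γ k ≤ 1 / (4 * L)) →
      ∀ (θ : ℕ → Fin n → EuclideanSpace ℝ (Fin d))
        (Y : ℕ → Matrix (Fin n) (Fin n) ℝ),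
        Y 0 = 1 → (∀ k, Y (k + 1) = A * Y k) →
        (∀ k i, θ (k + 1) i = (∑ j, A i j • θ k j)
            - (γ k / ((n : ℝ) * Y k i i)) • gradient (f i) (θ k i)) →
        let F : EuclideanSpace ℝ (Fin d) → ℝ := fun x => (1 / (n : ℝ)) * ∑ i, f i x
        let θhat : ℕ → EuclideanSpace ℝ (Fin d) := fun k => ∑ i, π i • θ k i
        let cons : ℕ → ℝ := fun k => ∑ i, ‖θ k i - θhat k‖ ^ 2
        let Lyap : ℕ → ℝ := fun k =>
          F (θhat k) + (3 * γ k * L ^ 2 / ((n : ℝ) * ρ)) * cons k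
        ∀ k : ℕ,
          Lyap (k + 1) ≤ Lyap k - (γ k / 4) * ‖gradient F (θhat k)‖ ^ 2
            - (3 * γ k * L ^ 2 * (2 - ρ) / (2 * (n : ℝ) * ρ)) * cons k
            + (3 * γ (k + 1) * L ^ 2 / ((n : ℝ) * ρ)) * cons (k + 1)
            + c * γ k * lam ^ (2 * k) := by
  have : Nonempty (Fin n) := ⟨⟨0, hn⟩⟩
  obtain ⟨b, hb, hdiag⟩ := Matrix.exists_pos_le_diag_pow hA_nonneg hA_diag hA_row hπ_pos
    hπ_left hπ_sum (abs_lt.2 ⟨by linarith, by linarith⟩) hspec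
  refine ⟨1 - ρ, by linarith, by linarith, 3 / 2 * G ^ 2 * n / b ^ 2, by positivity, ?_⟩
  intro γ hγ hγL θ Y hY0 hY hθ F θhat cons Lyap k
  have hYA : ∀ m, Y m = A ^ m := fun m => by
    induction m with
    | zero => exact hY0
    | succ m ih => rw [hY, ih, pow_succ']
  have havg : θhat (k + 1)
      = θhat k - γ k • ∑ i, (π i / (n * (A ^ k) i i)) • gradient (f i) (θ k i) := by
    simpa only [hYA] using sum_smul_eq_sub_of_step hπ_left (hθ k)
  have hdesc := average_sub_smul_weighted_gradient_le hdiff hLip hbdd hb (hdiag k)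
    (fun i => Matrix.sq_diag_pow_sub_le hA_row (fun i => (hπ_pos i).le) hπ_left hπ_sum hspec k i)
    (hγ k).le (by linarith [(le_div_iff₀ (by positivity)).1 (hγL k)]) (θ k) (θhat k)
  simp only [Fintype.card_fin, ← havg] at hdesc
  have hcoef : 3 * γ k * L ^ 2 / (n * ρ) - 3 * γ k * L ^ 2 * (2 - ρ) / (2 * n * ρ)
      = 3 * γ k * L ^ 2 / (2 * n) := by
    field_simp
    ring
  simp only [Lyap]
  linear_combination hdesc - cons k * hcoef

/-- One-step Lyapunov inequality for Di-DGD with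
`L_k = F(θ̂^k) + (3γ_k L²/(nρ))‖Θ^k − Θ̂^k‖_F²`: there exist `λ ∈ [0,1)` and `c ≥ 0`
(depending only on the problem data, not on the stepsizes or iterates) such that for
every stepsize sequence with `0 < γ_k ≤ 1/(4L)` and every run of Di-DGD,
`L_{k+1} ≤ L_k − (γ_k/4)‖∇F(θ̂^k)‖² − (3γ_k L²(2−ρ)/(2nρ))‖Θ^k − Θ̂^k‖_F²
  + (3γ_{k+1} L²/(nρ))‖Θ^{k+1} − Θ̂^{k+1}‖_F² + c γ_k λ^{2k}`.
Since `Θ̂^k = 𝟙πᵀΘ^k` has every row equal to `θ̂^k = ∑_i π_i θ_i^k`, the squared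
Frobenius norm `‖Θ^k − Θ̂^k‖_F²` equals `∑_i ‖θ_i^k − θ̂^k‖²`. -/
theorem stmt_12 (n d : ℕ) (hn : 1 ≤ n) (hd : 1 ≤ d)
    (A : Matrix (Fin n) (Fin n) ℝ)
    (hA_nonneg : ∀ i j, 0 ≤ A i j)
    (hA_diag : ∀ i, 0 < A i i)
    (hA_row : ∀ i, ∑ j, A i j = 1)
    (hA_prim : ∃ m : ℕ, 1 ≤ m ∧ ∀ i j, 0 < (A ^ m) i j)
    (π : Fin n → ℝ)
    (hπ_pos : ∀ i, 0 < π i)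
    (hπ_left : ∀ j, ∑ i, π i * A i j = π j)
    (hπ_sum : ∑ i, π i = 1)
    (ρ : ℝ) (hρ0 : 0 < ρ) (hρ1 : ρ ≤ 1)
    (hspec : ∀ x : Fin n → ℝ,
      ∑ i, (∑ j, (A i j - π j) * x j) ^ 2 ≤ (1 - ρ) ^ 2 * ∑ i, (x i) ^ 2)
    (L G : ℝ) (hL : 0 < L)
    (f : Fin n → EuclideanSpace ℝ (Fin d) → ℝ)
    (hdiff : ∀ i, Differentiable ℝ (f i))
    (hLip : ∀ i x z, ‖gradient (f i) x - gradient (f i) z‖ ≤ L * ‖x - z‖)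
    (hbdd : ∀ i x, ‖gradient (f i) x‖ ≤ G) :
    ∃ lam : ℝ, 0 ≤ lam ∧ lam < 1 ∧ ∃ c : ℝ, 0 ≤ c ∧
      ∀ (γ : ℕ → ℝ), (∀ k, 0 < γ k) → (∀ k, γ k ≤ 1 / (4 * L)) →
      ∀ (θ : ℕ → Fin n → EuclideanSpace ℝ (Fin d))
        (Y : ℕ → Matrix (Fin n) (Fin n) ℝ),
        Y 0 = 1 → (∀ k, Y (k + 1) = A * Y k) →
        (∀ k i, θ (k + 1) i = (∑ j, A i j • θ k j)
            - (γ k / ((n : ℝ) * Y k i i)) • gradient (f i) (θ k i)) →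
        let F : EuclideanSpace ℝ (Fin d) → ℝ := fun x => (1 / (n : ℝ)) * ∑ i, f i x
        let θhat : ℕ → EuclideanSpace ℝ (Fin d) := fun k => ∑ i, π i • θ k i
        let cons : ℕ → ℝ := fun k => ∑ i, ‖θ k i - θhat k‖ ^ 2
        let Lyap : ℕ → ℝ := fun k =>
          F (θhat k) + (3 * γ k * L ^ 2 / ((n : ℝ) * ρ)) * cons k
        ∀ k : ℕ,
          Lyap (k + 1) ≤ Lyap k - (γ k / 4) * ‖gradient F (θhat k)‖ ^ 2
            - (3 * γ k * L ^ 2 * (2 - ρ) / (2 * (n : ℝ) * ρ)) * cons k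
            + (3 * γ (k + 1) * L ^ 2 / ((n : ℝ) * ρ)) * cons (k + 1)
            + c * γ k * lam ^ (2 * k) :=
  stmt_12_general n d hn A hA_nonneg hA_diag hA_row π hπ_pos hπ_left hπ_sum ρ hρ0 hρ1 hspec L G hL f
    hdiff hLip hbdd
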